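/- arXiv:2506.07881 — 4 statements merged into one kernel-verified Lean document; each statement's English description precedes it below -/
import Mathlib

section
/- Let A be a set and S ⊆ A^{2×2} be (2)-reflexive and (2)-symmetric, and suppose H(S) is (2)-reflexive and (2)-symmetric whenever S is, and likewise for V. Then the union ⋃_{n≥0} (V∘H)^n(S) is (2)-transitive: if (a,b,c,d) and (c,d,e,f) are in the union then so is (a,b,e,f), and if (a,b,c,d) and (b,e,d,f) are in the union then so is (a,e,c,f). -/
/-!
`H2` and `V2` preserve (2)-reflexivity, and a (2)-reflexive `T` is contained in both `H2 T` and
`V2 T`. Hence the iterates `VH^[n] S` form an increasing chain whose `(n+1)`-st member contains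
both squares of the `n`-th. Two matrices lying in the union lie in
a common member, and their horizontal (resp. vertical) composite lies in the next one.
-/

variable {A : Type*}

/-- Horizontal relational square of a set of 2×2 matrices (a,b,c,d) with rows (a,b),(c,d). -/
def H2 (S : A → A → A → A → Prop) : A → A → A → A → Prop :=
  fun a b c d => ∃ e f, S a b e f ∧ S e f c d

/-- Vertical relational square. -/
def V2 (S : A → A → A → A → Prop) : A → A → A → A → Prop :=
  fun a b c d => ∃ e f, S e b f d ∧ S a e c f

/-- (2)-reflexivity. -/
def Refl2 (S : A → A → A → A → Prop) : Prop :=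
  ∀ a b c d, S a b c d → S a a c c ∧ S b b d d ∧ S c d c d ∧ S a b a b

/-- (2)-symmetry. -/
def Symm2 (S : A → A → A → A → Prop) : Prop :=
  ∀ a b c d, S a b c d → S b a d c ∧ S c d a b

/-- (2)-transitivity (horizontal and vertical). -/
def Trans2 (S : A → A → A → A → Prop) : Prop :=
  (∀ a b c d e f, S a b c d → S c d e f → S a b e f) ∧
  (∀ a b c d e f, S a b c d → S b e d f → S a e c f)

/-- (2)-equivalence relation. -/
def IsEq2 (S : A → A → A → A → Prop) : Prop := Refl2 S ∧ Symm2 S ∧ Trans2 S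

/-- The composite operator V ∘ H. -/
def VH (S : A → A → A → A → Prop) : A → A → A → A → Prop := V2 (H2 S)

section

variable {T U : A → A → A → A → Prop}

theorem Refl2.h2 (hT : Refl2 T) : Refl2 (H2 T) := by
  rintro a b c d ⟨e, f, hab, hcd⟩
  obtain ⟨hae, hbf, -, hab'⟩ := hT a b e f hab
  obtain ⟨hec, hfd, hcd', -⟩ := hT e f c d hcd
  exact ⟨⟨e, e, hae, hec⟩, ⟨f, f, hbf, hfd⟩, ⟨c, d, hcd', hcd'⟩, ⟨a, b, hab', hab'⟩⟩

theorem Refl2.v2 (hT : Refl2 T) : Refl2 (V2 T) := by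
  rintro a b c d ⟨e, f, hbd, hac⟩
  obtain ⟨-, hbd', hfd, heb⟩ := hT e b f d hbd
  obtain ⟨hac', -, hcf, hae⟩ := hT a e c f hac
  exact ⟨⟨a, c, hac', hac'⟩, ⟨b, d, hbd', hbd'⟩, ⟨f, f, hfd, hcf⟩, ⟨e, e, heb, hae⟩⟩

theorem Refl2.vh (hT : Refl2 T) : Refl2 (VH T) :=
  hT.h2.v2

theorem Refl2.iterate_vh (hT : Refl2 T) (n : ℕ) : Refl2 (VH^[n] T) := by
  induction n with
  | zero => exact hT
  | succ n ih => rw [Function.iterate_succ_apply']; exact ih.vh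

theorem Refl2.le_h2 (hT : Refl2 T) : T ≤ H2 T :=
  fun a b c d h => ⟨a, b, (hT a b c d h).2.2.2, h⟩

theorem Refl2.le_v2 (hT : Refl2 T) : T ≤ V2 T :=
  fun a b c d h => ⟨b, d, (hT a b c d h).2.1, h⟩

theorem V2_mono (hTU : T ≤ U) : V2 T ≤ V2 U :=
  fun _ _ _ _ ⟨e, f, h₁, h₂⟩ => ⟨e, f, hTU _ _ _ _ h₁, hTU _ _ _ _ h₂⟩

theorem Refl2.h2_le_vh (hT : Refl2 T) : H2 T ≤ VH T :=
  hT.h2.le_v2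

theorem Refl2.v2_le_vh (hT : Refl2 T) : V2 T ≤ VH T :=
  V2_mono hT.le_h2

theorem Refl2.monotone_iterate_vh (hT : Refl2 T) : Monotone fun n => VH^[n] T := by
  refine monotone_nat_of_le_succ fun n => ?_
  rw [Function.iterate_succ_apply']
  exact (hT.iterate_vh n).le_h2.trans (hT.iterate_vh n).h2_le_vh

end

theorem trans2_of_monotone {U : ℕ → A → A → A → A → Prop} (hU : Monotone U)
    (hH : ∀ n, H2 (U n) ≤ U (n + 1)) (hV : ∀ n, V2 (U n) ≤ U (n + 1)) :
    Trans2 fun a b c d => ∃ n, U n a b c d := by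
  constructor
  · rintro a b c d e f ⟨n, hn⟩ ⟨m, hm⟩
    exact ⟨max n m + 1, hH _ a b e f
      ⟨c, d, hU (le_max_left n m) a b c d hn, hU (le_max_right n m) c d e f hm⟩⟩
  · rintro a b c d e f ⟨n, hn⟩ ⟨m, hm⟩
    exact ⟨max n m + 1, hV _ a e c f
      ⟨b, d, hU (le_max_right n m) b e d f hm, hU (le_max_left n m) a b c d hn⟩⟩

theorem stmt3_general (S : A → A → A → A → Prop) (hrefl : Refl2 S) :
    Trans2 (fun a b c d => ∃ n : ℕ, (VH^[n] S) a b c d) := by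
  refine trans2_of_monotone hrefl.monotone_iterate_vh (fun n => ?_) (fun n => ?_) <;>
    simp only [Function.iterate_succ_apply']
  · exact (hrefl.iterate_vh n).h2_le_vh
  · exact (hrefl.iterate_vh n).v2_le_vh

theorem stmt3 (S : A → A → A → A → Prop) (hrefl : Refl2 S) (hsymm : Symm2 S)
    (hH : ∀ T : A → A → A → A → Prop, Refl2 T → Symm2 T → Refl2 (H2 T) ∧ Symm2 (H2 T))
    (hV : ∀ T : A → A → A → A → Prop, Refl2 T → Symm2 T → Refl2 (V2 T) ∧ Symm2 (V2 T)) :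
    Trans2 (fun a b c d => ∃ n : ℕ, (VH^[n] S) a b c d) :=
  stmt3_general S hrefl
end

section
/- Let A be a set and S ⊆ A^{2×2} be (2)-reflexive and (2)-symmetric. Then the least (2)-equivalence relation Eq₂(S) containing S equals the union ⋃_{n≥0} (V∘H)^n(S). -/
/-!
Each of `H` and `V` preserves (2)-reflexivity and (2)-symmetry, and contains its argument once
that argument is (2)-reflexive. Hence the iterates `(V ∘ H)^n S` form an increasing chain of
(2)-reflexive, (2)-symmetric relations, so their union is again (2)-reflexive and (2)-symmetric,
and any two of its elements lie in a common iterate; the next iterate then contains their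
horizontal and vertical composites, so the union is (2)-transitive. Conversely every
(2)-equivalence relation containing `S` is closed under `V ∘ H`, hence contains every iterate.
-/

variable {A : Type*}

/-- Eq₂(S): the least (2)-equivalence relation containing S, as the intersection of all
(2)-equivalence relations containing S. -/
def Eq2 (S : A → A → A → A → Prop) : A → A → A → A → Prop :=
  fun a b c d => ∀ R : A → A → A → A → Prop,
    IsEq2 R → (∀ x y z w, S x y z w → R x y z w) → R a b c d

variable {S R : A → A → A → A → Prop}

theorem monotone_v2 : Monotone (V2 : (A → A → A → A → Prop) → _) := by
  rintro S T hST a b c d ⟨e, f, h₁, h₂⟩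
  exact ⟨e, f, hST _ _ _ _ h₁, hST _ _ _ _ h₂⟩

namespace Refl2

theorem h2_s4 (h : Refl2 S) : Refl2 (H2 S) := by
  rintro a b c d ⟨e, f, h₁, h₂⟩
  obtain ⟨h₁a, h₁b, -, h₁d⟩ := h _ _ _ _ h₁
  obtain ⟨h₂a, h₂b, h₂c, -⟩ := h _ _ _ _ h₂
  exact ⟨⟨e, e, h₁a, h₂a⟩, ⟨f, f, h₁b, h₂b⟩, ⟨c, d, h₂c, h₂c⟩, ⟨a, b, h₁d, h₁d⟩⟩

theorem v2_s4 (h : Refl2 S) : Refl2 (V2 S) := by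
  rintro a b c d ⟨e, f, h₁, h₂⟩
  obtain ⟨-, h₁b, h₁c, h₁d⟩ := h _ _ _ _ h₁
  obtain ⟨h₂a, -, h₂c, h₂d⟩ := h _ _ _ _ h₂
  exact ⟨⟨a, c, h₂a, h₂a⟩, ⟨b, d, h₁b, h₁b⟩, ⟨f, f, h₁c, h₂c⟩, ⟨e, e, h₁d, h₂d⟩⟩

theorem iterate_vh_s4 (h : Refl2 S) (n : ℕ) : Refl2 (VH^[n] S) := by
  induction n with
  | zero => exact h
  | succ n ih => rw [Function.iterate_succ_apply']; exact ih.h2_s4.v2_s4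

theorem le_h2_s4 (h : Refl2 S) : S ≤ H2 S :=
  fun _ _ c d hS => ⟨c, d, hS, (h _ _ _ _ hS).2.2.1⟩

theorem le_v2_s4 (h : Refl2 S) : S ≤ V2 S :=
  fun _ b _ d hS => ⟨b, d, (h _ _ _ _ hS).2.1, hS⟩

theorem le_vh (h : Refl2 S) : S ≤ VH S :=
  h.le_h2_s4.trans h.h2_s4.le_v2_s4

theorem monotone_iterate_vh_s4 (h : Refl2 S) : Monotone (VH^[·] S) :=
  monotone_nat_of_le_succ fun n => by
    rw [Function.iterate_succ_apply']; exact (h.iterate_vh_s4 n).le_vh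

end Refl2

namespace Symm2

theorem h2_s4 (h : Symm2 S) : Symm2 (H2 S) := by
  rintro a b c d ⟨e, f, h₁, h₂⟩
  obtain ⟨h₁s, h₁r⟩ := h _ _ _ _ h₁
  obtain ⟨h₂s, h₂r⟩ := h _ _ _ _ h₂
  exact ⟨⟨f, e, h₁s, h₂s⟩, ⟨e, f, h₂r, h₁r⟩⟩

theorem v2_s4 (h : Symm2 S) : Symm2 (V2 S) := by
  rintro a b c d ⟨e, f, h₁, h₂⟩
  obtain ⟨h₁s, h₁r⟩ := h _ _ _ _ h₁
  obtain ⟨h₂s, h₂r⟩ := h _ _ _ _ h₂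
  exact ⟨⟨e, f, h₂s, h₁s⟩, ⟨f, e, h₁r, h₂r⟩⟩

theorem iterate_vh_s4 (h : Symm2 S) (n : ℕ) : Symm2 (VH^[n] S) := by
  induction n with
  | zero => exact h
  | succ n ih => rw [Function.iterate_succ_apply']; exact ih.h2_s4.v2_s4

end Symm2

namespace IsEq2

theorem vh_le (hR : IsEq2 R) (hS : S ≤ R) : VH S ≤ R := by
  obtain ⟨-, -, htransH, htransV⟩ := hR
  have hH : H2 S ≤ R := fun _ _ _ _ ⟨_, _, h₁, h₂⟩ =>
    htransH _ _ _ _ _ _ (hS _ _ _ _ h₁) (hS _ _ _ _ h₂)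
  exact fun _ _ _ _ ⟨_, _, h₁, h₂⟩ => htransV _ _ _ _ _ _ (hH _ _ _ _ h₂) (hH _ _ _ _ h₁)

theorem iterate_vh_le (hR : IsEq2 R) (hS : S ≤ R) (n : ℕ) : VH^[n] S ≤ R := by
  induction n with
  | zero => exact hS
  | succ n ih => rw [Function.iterate_succ_apply']; exact hR.vh_le ih

end IsEq2

def iUnionIterateVH (S : A → A → A → A → Prop) : A → A → A → A → Prop :=
  fun a b c d => ∃ n, VH^[n] S a b c d

theorem iUnionIterateVH.exists_common_iterate (hS : Refl2 S) {a b c d e f g h : A}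
    (h₁ : iUnionIterateVH S a b c d) (h₂ : iUnionIterateVH S e f g h) :
    ∃ n, VH^[n] S a b c d ∧ VH^[n] S e f g h := by
  obtain ⟨m, hm⟩ := h₁
  obtain ⟨n, hn⟩ := h₂
  exact ⟨max m n, hS.monotone_iterate_vh_s4 (le_max_left m n) _ _ _ _ hm,
    hS.monotone_iterate_vh_s4 (le_max_right m n) _ _ _ _ hn⟩

theorem isEq2_iUnionIterateVH (hrefl : Refl2 S) (hsymm : Symm2 S) :
    IsEq2 (iUnionIterateVH S) := by
  refine ⟨?refl, ?symm, ?transH, ?transV⟩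
  case refl =>
    rintro a b c d ⟨n, h⟩
    obtain ⟨h₁, h₂, h₃, h₄⟩ := hrefl.iterate_vh_s4 n _ _ _ _ h
    exact ⟨⟨n, h₁⟩, ⟨n, h₂⟩, ⟨n, h₃⟩, ⟨n, h₄⟩⟩
  case symm =>
    rintro a b c d ⟨n, h⟩
    obtain ⟨h₁, h₂⟩ := hsymm.iterate_vh_s4 n _ _ _ _ h
    exact ⟨⟨n, h₁⟩, ⟨n, h₂⟩⟩
  case transH =>
    intro a b c d e f h₁ h₂
    obtain ⟨n, h₁, h₂⟩ := iUnionIterateVH.exists_common_iterate hrefl h₁ h₂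
    refine ⟨n + 1, ?_⟩
    rw [Function.iterate_succ_apply']
    exact (hrefl.iterate_vh_s4 n).h2_s4.le_v2_s4 _ _ _ _ ⟨c, d, h₁, h₂⟩
  case transV =>
    intro a b c d e f h₁ h₂
    obtain ⟨n, h₁, h₂⟩ := iUnionIterateVH.exists_common_iterate hrefl h₁ h₂
    refine ⟨n + 1, ?_⟩
    rw [Function.iterate_succ_apply']
    exact monotone_v2 (hrefl.iterate_vh_s4 n).le_h2_s4 _ _ _ _ ⟨b, d, h₂, h₁⟩

theorem stmt4 (S : A → A → A → A → Prop) (hrefl : Refl2 S) (hsymm : Symm2 S) :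
    ∀ a b c d, Eq2 S a b c d ↔ ∃ n : ℕ, (VH^[n] S) a b c d := by
  intro a b c d
  constructor
  · intro h
    exact h _ (isEq2_iUnionIterateVH hrefl hsymm) fun _ _ _ _ hS => ⟨0, hS⟩
  · rintro ⟨n, h⟩ R hR hSR
    exact hR.iterate_vh_le hSR n _ _ _ _ h
end

section
/- Fix l ≥ 1 and 0 ≤ i ≤ 2l+1, and let A be a nonempty set. There is an assignment of a projection operation on A⁴ (each projection being one of π₁, π₂, π₃, π₄ : A⁴ → A) to each operation symbol s_j with j ∈ {0,…,2l+1} \ {i}, such that all identities from the list Λ_l that mention only symbols other than s_i are satisfied. In particular: if i = 0, interpret every s_j (j ≠ 0) as the third projection; if i = 2l+1, interpret every s_j (j ≠ 2l+1) as the first projection; if 1 ≤ i ≤ 2l, interpret s_j for j < i as the third projection and s_j for j > i as the first projection. -/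
/-!
Interpret `s_j` as the third projection for `j < i` and as the first projection for `j ≥ i`.
Besides idempotence, `(2)` and `(8)`, every identity of `Λ_l` equates two adjacent symbols
`s_j`, `s_{j+1}`; when neither is `s_i`, both lie on the same side of `i` and so are the same
projection. Finally `π₃(y,x,x,x) = x` gives `(2)` and `π₁(x,y,y,y) = x` gives `(8)`.
-/

/-- p is one of the four projections A⁴ → A. -/
def IsProj {A : Type*} (p : A → A → A → A → A) : Prop :=
  (p = fun a _ _ _ => a) ∨ (p = fun _ b _ _ => b) ∨
  (p = fun _ _ c _ => c) ∨ (p = fun _ _ _ d => d)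

def splitProj {A : Type*} (i j : ℕ) : A → A → A → A → A :=
  if j < i then fun _ _ c _ => c else fun a _ _ _ => a

section splitProj

variable {A : Type*} {i j : ℕ}

lemma splitProj_of_lt (h : j < i) : (splitProj i j : A → A → A → A → A) = fun _ _ c _ => c :=
  if_pos h

lemma splitProj_of_le (h : i ≤ j) : (splitProj i j : A → A → A → A → A) = fun a _ _ _ => a :=
  if_neg (Nat.not_lt.mpr h)

lemma isProj_splitProj : IsProj (splitProj i j : A → A → A → A → A) := by
  rcases lt_or_ge j i with h | h
  · exact Or.inr (Or.inr (Or.inl (splitProj_of_lt h)))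
  · exact Or.inl (splitProj_of_le h)

lemma splitProj_self (x : A) : splitProj i j x x x x = x := by
  unfold splitProj; split_ifs <;> rfl

lemma splitProj_succ (h : j + 1 ≠ i) :
    (splitProj i (j + 1) : A → A → A → A → A) = splitProj i j := by
  unfold splitProj
  congr 1
  exact propext (by omega)

end splitProj

theorem stmt12_general {A : Type*} (l i : ℕ) (hi : i ≤ 2 * l + 1) :
    ∃ s : ℕ → A → A → A → A → A,
      (∀ j, j ≤ 2 * l + 1 → j ≠ i → IsProj (s j)) ∧
      -- (1) idempotence for each symbol other than s_i
      (∀ j, j ≤ 2 * l + 1 → j ≠ i → ∀ x : A, s j x x x x = x) ∧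
      -- (2)
      ((0 : ℕ) ≠ i → ∀ x y : A, s 0 y x x x = x) ∧
      -- (3)
      ((0 : ℕ) ≠ i → (1 : ℕ) ≠ i → ∀ x y : A,
        s 0 x y x x = s 1 x y x x ∧ s 0 y y x x = s 1 y y x x) ∧
      -- (4)
      (∀ k, k < l → 2 * k + 1 ≠ i → 2 * (k + 1) ≠ i → ∀ x y : A,
        s (2 * k + 1) x x y x = s (2 * (k + 1)) x x y x ∧
        s (2 * k + 1) y x y x = s (2 * (k + 1)) y x y x) ∧
      -- (5)
      (∀ k, 1 ≤ k → k < l → 2 * k ≠ i → 2 * k + 1 ≠ i → ∀ x y : A,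
        s (2 * k) x y x x = s (2 * k + 1) x y x x ∧
        s (2 * k) y y x x = s (2 * k + 1) y y x x) ∧
      -- (6),(7)
      (2 * l ≠ i → 2 * l + 1 ≠ i → ∀ x y : A,
        s (2 * l) x y x x = s (2 * l + 1) x y x x ∧
        s (2 * l) y y x x = s (2 * l + 1) y y x x) ∧
      -- (8)
      (2 * l + 1 ≠ i → ∀ x y : A, s (2 * l + 1) x y y y = x) := by
  refine ⟨splitProj i, fun _ _ _ => isProj_splitProj, fun _ _ _ => splitProj_self, ?_, ?_, ?_, ?_,
    ?_, ?_⟩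
  · intro h0 x y
    rw [splitProj_of_lt (Nat.pos_of_ne_zero h0.symm)]
  · intro _ h1 x y
    rw [← zero_add 1, splitProj_succ h1]
    exact ⟨rfl, rfl⟩
  · intro k _ _ h x y
    rw [show 2 * (k + 1) = 2 * k + 1 + 1 by ring] at h ⊢
    rw [splitProj_succ h]
    exact ⟨rfl, rfl⟩
  · intro k _ _ _ h x y
    rw [splitProj_succ h]
    exact ⟨rfl, rfl⟩
  · intro _ h x y
    rw [splitProj_succ h]
    exact ⟨rfl, rfl⟩
  · intro _ x y
    rw [splitProj_of_le hi]

theorem stmt12 {A : Type*} [Nonempty A] (l i : ℕ) (hl : 1 ≤ l) (hi : i ≤ 2 * l + 1) :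
    ∃ s : ℕ → A → A → A → A → A,
      (∀ j, j ≤ 2 * l + 1 → j ≠ i → IsProj (s j)) ∧
      -- (1) idempotence for each symbol other than s_i
      (∀ j, j ≤ 2 * l + 1 → j ≠ i → ∀ x : A, s j x x x x = x) ∧
      -- (2)
      ((0 : ℕ) ≠ i → ∀ x y : A, s 0 y x x x = x) ∧
      -- (3)
      ((0 : ℕ) ≠ i → (1 : ℕ) ≠ i → ∀ x y : A,
        s 0 x y x x = s 1 x y x x ∧ s 0 y y x x = s 1 y y x x) ∧
      -- (4)
      (∀ k, k < l → 2 * k + 1 ≠ i → 2 * (k + 1) ≠ i → ∀ x y : A,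
        s (2 * k + 1) x x y x = s (2 * (k + 1)) x x y x ∧
        s (2 * k + 1) y x y x = s (2 * (k + 1)) y x y x) ∧
      -- (5)
      (∀ k, 1 ≤ k → k < l → 2 * k ≠ i → 2 * k + 1 ≠ i → ∀ x y : A,
        s (2 * k) x y x x = s (2 * k + 1) x y x x ∧
        s (2 * k) y y x x = s (2 * k + 1) y y x x) ∧
      -- (6),(7)
      (2 * l ≠ i → 2 * l + 1 ≠ i → ∀ x y : A,
        s (2 * l) x y x x = s (2 * l + 1) x y x x ∧
        s (2 * l) y y x x = s (2 * l + 1) y y x x) ∧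
      -- (8)
      (2 * l + 1 ≠ i → ∀ x y : A, s (2 * l + 1) x y y y = x) :=
  stmt12_general l i hi
end

section
/- Let A be a set with at least two elements and l ≥ 1. There is no assignment of projections π_k : A⁴ → A (k ∈ {1,2,3,4}) to all the operation symbols s_0, …, s_{2l+1} simultaneously satisfying all identities of Λ_l. In other words, Λ_l is a nontrivial (idempotent) Maltsev condition: it cannot be satisfied by projections on a two-element set. -/
namespace IsProj

variable {A : Type*} {p q : A → A → A → A → A}

lemma eq_fst_or_apply_fst_eq (hp : IsProj p) :
    (p = fun x _ _ _ => x) ∨ ∀ x y, p y x x x = x := by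
  rcases hp with rfl | rfl | rfl | rfl
  exacts [Or.inl rfl, Or.inr fun _ _ => rfl, Or.inr fun _ _ => rfl, Or.inr fun _ _ => rfl]

lemma apply_fst_eq_of_agree_xyxx {a b : A} (hab : a ≠ b) (hp : IsProj p) (hq : IsProj q)
    (hp₁ : ∀ x y, p y x x x = x) (e₁ : p a b a a = q a b a a) (e₂ : p b b a a = q b b a a) :
    ∀ x y, q y x x x = x := by
  refine hq.eq_fst_or_apply_fst_eq.resolve_left ?_
  rintro rfl
  rcases hp with rfl | rfl | rfl | rfl
  exacts [hab (hp₁ b a), hab e₁.symm, hab e₂, hab e₂]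

lemma apply_fst_eq_of_agree_xxyx {a b : A} (hab : a ≠ b) (hp : IsProj p) (hq : IsProj q)
    (hp₁ : ∀ x y, p y x x x = x) (e₁ : p a a b a = q a a b a) (e₂ : p b a b a = q b a b a) :
    ∀ x y, q y x x x = x := by
  refine hq.eq_fst_or_apply_fst_eq.resolve_left ?_
  rintro rfl
  rcases hp with rfl | rfl | rfl | rfl
  exacts [hab (hp₁ b a), hab e₂, hab e₁.symm, hab e₂]

end IsProj

theorem stmt13_general {A : Type*} (a b : A) (hab : a ≠ b) (l : ℕ) :
    ¬ ∃ s : ℕ → A → A → A → A → A,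
      (∀ j, j ≤ 2 * l + 1 → IsProj (s j)) ∧
      -- (1)
      (∀ j, j ≤ 2 * l + 1 → ∀ x : A, s j x x x x = x) ∧
      -- (2)
      (∀ x y : A, s 0 y x x x = x) ∧
      -- (3)
      (∀ x y : A, s 0 x y x x = s 1 x y x x ∧ s 0 y y x x = s 1 y y x x) ∧
      -- (4)
      (∀ k, k < l → ∀ x y : A,
        s (2 * k + 1) x x y x = s (2 * (k + 1)) x x y x ∧
        s (2 * k + 1) y x y x = s (2 * (k + 1)) y x y x) ∧
      -- (5)
      (∀ k, 1 ≤ k → k < l → ∀ x y : A,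
        s (2 * k) x y x x = s (2 * k + 1) x y x x ∧
        s (2 * k) y y x x = s (2 * k + 1) y y x x) ∧
      -- (6),(7)
      (∀ x y : A,
        s (2 * l) x y x x = s (2 * l + 1) x y x x ∧
        s (2 * l) y y x x = s (2 * l + 1) y y x x) ∧
      -- (8)
      (∀ x y : A, s (2 * l + 1) x y y y = x) := by
  rintro ⟨s, hproj, -, h2, h3, h4, h5, h67, h8⟩
  have h567 : ∀ k, 1 ≤ k → k ≤ l →
      s (2 * k) a b a a = s (2 * k + 1) a b a a ∧ s (2 * k) b b a a = s (2 * k + 1) b b a a := by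
    intro k hk hkl
    rcases hkl.lt_or_eq with hkl | rfl
    exacts [h5 k hk hkl a b, h67 a b]
  have odd_apply_fst : ∀ k, k ≤ l → ∀ x y, s (2 * k + 1) y x x x = x := by
    intro k
    induction k with
    | zero =>
      exact fun _ => IsProj.apply_fst_eq_of_agree_xyxx hab (hproj 0 (by omega))
        (hproj 1 (by omega)) h2 (h3 a b).1 (h3 a b).2
    | succ k ih =>
      intro hk
      have even_apply_fst : ∀ x y, s (2 * (k + 1)) y x x x = x :=
        IsProj.apply_fst_eq_of_agree_xxyx hab (hproj _ (by omega)) (hproj _ (by omega))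
          (ih (by omega)) (h4 k (by omega) a b).1 (h4 k (by omega) a b).2
      exact IsProj.apply_fst_eq_of_agree_xyxx hab (hproj _ (by omega)) (hproj _ (by omega))
        even_apply_fst (h567 (k + 1) (by omega) hk).1 (h567 (k + 1) (by omega) hk).2
  exact hab ((h8 a b).symm.trans (odd_apply_fst l le_rfl b a))

theorem stmt13 {A : Type*} (a b : A) (hab : a ≠ b) (l : ℕ) (hl : 1 ≤ l) :
    ¬ ∃ s : ℕ → A → A → A → A → A,
      (∀ j, j ≤ 2 * l + 1 → IsProj (s j)) ∧
      -- (1)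
      (∀ j, j ≤ 2 * l + 1 → ∀ x : A, s j x x x x = x) ∧
      -- (2)
      (∀ x y : A, s 0 y x x x = x) ∧
      -- (3)
      (∀ x y : A, s 0 x y x x = s 1 x y x x ∧ s 0 y y x x = s 1 y y x x) ∧
      -- (4)
      (∀ k, k < l → ∀ x y : A,
        s (2 * k + 1) x x y x = s (2 * (k + 1)) x x y x ∧
        s (2 * k + 1) y x y x = s (2 * (k + 1)) y x y x) ∧
      -- (5)
      (∀ k, 1 ≤ k → k < l → ∀ x y : A,
        s (2 * k) x y x x = s (2 * k + 1) x y x x ∧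
        s (2 * k) y y x x = s (2 * k + 1) y y x x) ∧
      -- (6),(7)
      (∀ x y : A,
        s (2 * l) x y x x = s (2 * l + 1) x y x x ∧
        s (2 * l) y y x x = s (2 * l + 1) y y x x) ∧
      -- (8)
      (∀ x y : A, s (2 * l + 1) x y y y = x) :=
  stmt13_general a b hab l
end
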